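/- Let Z be a finite type, let q and p be pmfs on Z with q absolutely continuous with respect to p (p(z) = 0 implies q(z) = 0), and let E ⊆ Z be any subset. Then the binary data processing inequality holds: d_bin(q(E) ‖ p(E)) ≤ KL(q‖p), where q(E) = Σ_{z∈E} q(z) and p(E) = Σ_{z∈E} p(z). -/

import Mathlib

/-- A probability mass function on a finite type: nonnegative and summing to 1. -/
def IsPMF {Z : Type*} [Fintype Z] (q : Z → ℝ) : Prop :=
  (∀ z, 0 ≤ q z) ∧ ∑ z, q z = 1

/-- KL divergence between pmfs on a finite type (convention 0·log 0 = 0,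
automatic in Lean). -/
noncomputable def KL {Z : Type*} [Fintype Z] (q p : Z → ℝ) : ℝ :=
  ∑ z, q z * Real.log (q z / p z)

/-- Binary KL divergence `d_bin(a‖b)` (convention 0·log 0 = 0, automatic in Lean). -/
noncomputable def dbin (a b : ℝ) : ℝ :=
  a * Real.log (a / b) + (1 - a) * Real.log ((1 - a) / (1 - b))

/-- Log-sum inequality. -/
lemma log_sum_ineq {Z : Type*} (s : Finset Z) (a b : Z → ℝ)
    (ha : ∀ z ∈ s, 0 ≤ a z) (hb : ∀ z ∈ s, 0 ≤ b z)
    (habs : ∀ z ∈ s, b z = 0 → a z = 0) :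
    (∑ z ∈ s, a z) * Real.log ((∑ z ∈ s, a z) / (∑ z ∈ s, b z)) ≤
      ∑ z ∈ s, a z * Real.log (a z / b z) := by
  set A := ∑ z ∈ s, a z with hA
  set B := ∑ z ∈ s, b z with hB
  rcases eq_or_lt_of_le (Finset.sum_nonneg hb) with hB0 | hBpos
  · -- B = 0, so all b z = 0, all a z = 0
    have hbz : ∀ z ∈ s, b z = 0 := by
      intro z hz
      exact ((Finset.sum_eq_zero_iff_of_nonneg hb).mp hB0.symm) z hz
    have haz : ∀ z ∈ s, a z = 0 := fun z hz => habs z hz (hbz z hz)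
    have hA0 : A = 0 := Finset.sum_eq_zero haz
    rw [hA0]
    simp only [zero_mul]
    apply Finset.sum_nonneg
    intro z hz
    rw [haz z hz]
    simp
  · -- B > 0
    have key := (Real.convexOn_mul_log).map_sum_le
      (t := s) (w := fun z => b z / B) (p := fun z => a z / b z)
      (fun z hz => div_nonneg (hb z hz) hBpos.le)
      (by rw [← Finset.sum_div]; exact div_self (show B ≠ 0 from hBpos.ne'))
      (fun z hz => Set.mem_Ici.mpr (div_nonneg (ha z hz) (hb z hz)))
    have h1 : ∀ z ∈ s, (b z / B) • (a z / b z) = a z / B := by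
      intro z hz
      rcases eq_or_ne (b z) 0 with h0 | h0
      · simp [h0, habs z hz h0]
      · field_simp
        rw [smul_eq_mul, div_mul_div_comm, mul_comm (b z) (a z), mul_div_mul_right _ _ h0]
    have h2 : ∀ z ∈ s, (b z / B) • ((a z / b z) * Real.log (a z / b z))
        = (a z * Real.log (a z / b z)) / B := by
      intro z hz
      rcases eq_or_ne (b z) 0 with h0 | h0
      · simp [h0, habs z hz h0]
      · field_simp
        rw [smul_eq_mul, div_mul_div_comm, mul_comm (b z) (a z * Real.log (a z / b z)), mul_div_mul_right _ _ h0]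
    rw [Finset.sum_congr rfl h1, Finset.sum_congr rfl h2, ← Finset.sum_div, ← Finset.sum_div, ← hA] at key
    have key2 : (A / B) * Real.log (A / B) ≤ (∑ z ∈ s, a z * Real.log (a z / b z)) / B := key
    calc A * Real.log (A / B) = B * ((A / B) * Real.log (A / B)) := by
          rw [← mul_assoc, mul_div_assoc', mul_comm B A, mul_div_assoc, div_self (show B ≠ 0 from hBpos.ne'), mul_one]
      _ ≤ B * ((∑ z ∈ s, a z * Real.log (a z / b z)) / B) :=
          mul_le_mul_of_nonneg_left key2 hBpos.le
      _ = ∑ z ∈ s, a z * Real.log (a z / b z) := by rw [mul_div_assoc', mul_comm B, mul_div_assoc, div_self (show B ≠ 0 from hBpos.ne'), mul_one]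

/-- **Binary data processing inequality.**
For pmfs `q ≪ p` on a finite type and any subset `E`,
`d_bin(q(E) ‖ p(E)) ≤ KL(q‖p)`. -/
theorem binary_data_processing_inequality
    {Z : Type*} [Fintype Z]
    (q p : Z → ℝ) (hq : IsPMF q) (hp : IsPMF p)
    (habs : ∀ z, p z = 0 → q z = 0)
    (E : Finset Z) :
    dbin (∑ z ∈ E, q z) (∑ z ∈ E, p z) ≤ KL q p := by
  classical
  obtain ⟨hq0, hq1⟩ := hq
  obtain ⟨hp0, hp1⟩ := hp
  have hqc : ∑ z ∈ Eᶜ, q z = 1 - ∑ z ∈ E, q z := by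
    have := Finset.sum_add_sum_compl E q
    linarith [this.trans hq1]
  have hpc : ∑ z ∈ Eᶜ, p z = 1 - ∑ z ∈ E, p z := by
    have := Finset.sum_add_sum_compl E p
    linarith [this.trans hp1]
  have hKL : KL q p = (∑ z ∈ E, q z * Real.log (q z / p z)) +
      ∑ z ∈ Eᶜ, q z * Real.log (q z / p z) := by
    rw [KL, ← Finset.sum_add_sum_compl E]
  rw [hKL, dbin, ← hqc, ← hpc]
  gcongr
  · exact log_sum_ineq E q p (fun z _ => hq0 z) (fun z _ => hp0 z) (fun z _ => habs z)
  · exact log_sum_ineq Eᶜ q p (fun z _ => hq0 z) (fun z _ => hp0 z) (fun z _ => habs z)
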